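/- Let c: ℤ^2 → ℂ be a finitary power series (finitely many distinct coefficients) and suppose f, g are Laurent polynomials with no common nonconstant factor such that both f·c and g·c are two-periodic. Then c itself is two-periodic. -/

import Mathlib

/-- The coefficient at `u` of the formal product `f · c` of a Laurent polynomial
`f` with the power series `c`. -/
noncomputable def prodCoeff (f : AddMonoidAlgebra ℂ (ℤ × ℤ)) (c : ℤ × ℤ → ℂ)
    (u : ℤ × ℤ) : ℂ :=
  ∑ w ∈ f.coeff.support, f.coeff w * c (u - w)

/-- `h` is two-periodic: invariant under two linearly independent translations. -/
def TwoPeriodic (h : ℤ × ℤ → ℂ) : Prop :=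
  ∃ t₁ t₂ : ℤ × ℤ, t₁.1 * t₂.2 - t₁.2 * t₂.1 ≠ 0 ∧
    (∀ u, h (u - t₁) = h u) ∧ (∀ u, h (u - t₂) = h u)

namespace PC
open Polynomial
abbrev L := AddMonoidAlgebra ℂ (ℤ × ℤ)
abbrev RY := Polynomial (Polynomial ℂ)


lemma prodCoeff_def (f : L) (c u) :
    prodCoeff f c u = f.coeff.sum (fun w a => a * c (u - w)) := rfl

lemma prodCoeff_zero_left (c u) : prodCoeff (0 : L) c u = 0 := by simp [prodCoeff]

lemma prodCoeff_add_left (f g : L) (c u) :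
    prodCoeff (f + g) c u = prodCoeff f c u + prodCoeff g c u := by
  simp only [prodCoeff_def]
  rw [AddMonoidAlgebra.coeff_add]
  exact Finsupp.sum_add_index (by simp) (by intros; ring)

lemma prodCoeff_single (v : ℤ × ℤ) (a : ℂ) (c u) :
    prodCoeff (AddMonoidAlgebra.single v a) c u = a * c (u - v) := by
  simp only [prodCoeff_def]
  rw [AddMonoidAlgebra.coeff_single]
  exact Finsupp.sum_single_index (by simp)

lemma prodCoeff_congr (f : L) {c₁ c₂} (u) (h : ∀ x, c₁ x = c₂ x) :
    prodCoeff f c₁ u = prodCoeff f c₂ u := by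
  simp only [prodCoeff, h]

lemma prodCoeff_zero_right (f : L) (c u) (h : ∀ x, c x = 0) : prodCoeff f c u = 0 := by
  simp [prodCoeff, h]

lemma inductionL {p : L → Prop} (f : L) (h0 : p 0)
    (hadd : ∀ f g : L, p f → p g → p (f + g))
    (hsingle : ∀ v a, p (AddMonoidAlgebra.single v a)) : p f :=
  AddMonoidAlgebra.induction_linear f h0 (fun a b => hadd a b) hsingle

lemma prodCoeff_mul (f g : L) (c u) :
    prodCoeff (f * g) c u = prodCoeff f (prodCoeff g c) u := by
  induction f using inductionL with
  | h0 => simp [prodCoeff_zero_left]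
  | hadd f₁ f₂ h₁ h₂ =>
    rw [add_mul, prodCoeff_add_left, prodCoeff_add_left, h₁, h₂]
  | hsingle v a =>
    induction g using inductionL with
    | h0 =>
      rw [mul_zero, prodCoeff_zero_left, prodCoeff_single]
      simp [prodCoeff_zero_left]
    | hadd g₁ g₂ h₁ h₂ =>
      rw [mul_add, prodCoeff_add_left, h₁, h₂, prodCoeff_single, prodCoeff_single]
      rw [prodCoeff_congr (AddMonoidAlgebra.single v a) u
        (fun x => prodCoeff_add_left g₁ g₂ c x), prodCoeff_single]
      ring
    | hsingle w b =>
      rw [AddMonoidAlgebra.single_mul_single, prodCoeff_single, prodCoeff_single,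
        prodCoeff_single, sub_sub]; ring



lemma coeff_ne_zero {p : L} (h : p ≠ 0) : p.coeff ≠ 0 :=
  fun h' => h (AddMonoidAlgebra.ext (by rw [h']; rfl))

def periods (h : ℤ × ℤ → ℂ) : AddSubgroup (ℤ × ℤ) where
  carrier := {t | ∀ u, h (u - t) = h u}
  zero_mem' := by simp
  add_mem' := by
    intro a b ha hb u
    rw [show u - (a + b) = u - b - a by ring, ha, hb]
  neg_mem' := by
    intro a ha u
    have := ha (u + a)
    rw [add_sub_cancel_right] at this
    rw [sub_neg_eq_add, ← this]

lemma smul_fst (n : ℤ) (t : ℤ × ℤ) : (n • t).1 = n * t.1 := rfl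
lemma smul_snd (n : ℤ) (t : ℤ × ℤ) : (n • t).2 = n * t.2 := rfl

lemma exists_horiz {h : ℤ × ℤ → ℂ} (H : TwoPeriodic h) :
    ∃ K : ℤ, K ≠ 0 ∧ ((K, 0) : ℤ × ℤ) ∈ periods h := by
  obtain ⟨t₁, t₂, hd, h1, h2⟩ := H
  refine ⟨t₁.1 * t₂.2 - t₁.2 * t₂.1, hd, ?_⟩
  have : ((t₁.1 * t₂.2 - t₁.2 * t₂.1, 0) : ℤ × ℤ) = t₂.2 • t₁ - t₁.2 • t₂ := by
    apply Prod.ext <;> simp [smul_fst, smul_snd] <;> ring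
  rw [this]
  have m1 : t₁ ∈ periods h := h1
  have m2 : t₂ ∈ periods h := h2
  exact sub_mem (zsmul_mem m1 _) (zsmul_mem m2 _)

lemma mul_period {h : ℤ × ℤ → ℂ} {K : ℤ} (hK : ((K, 0) : ℤ × ℤ) ∈ periods h) (n : ℤ) :
    ((n * K, 0) : ℤ × ℤ) ∈ periods h := by
  have : ((n * K, 0) : ℤ × ℤ) = n • ((K, 0) : ℤ × ℤ) := by
    apply Prod.ext <;> simp [smul_fst, smul_snd]
  rw [this]; exact zsmul_mem hK n



lemma oneD (c : ℤ × ℤ → ℂ) (hfin : (Set.range c).Finite)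
    (τ : L) (hτ : τ ≠ 0) (hline : ∀ w ∈ τ.coeff.support, w.2 = 0)
    (hann : ∀ u, prodCoeff τ c u = 0) :
    ∃ P : ℤ, P ≠ 0 ∧ ∀ u, c (u - (P, 0)) = c u := by
  classical
  have hsupp : τ.coeff.support.Nonempty := Finsupp.support_nonempty_iff.mpr (coeff_ne_zero hτ)
  set S1 : Finset ℤ := τ.coeff.support.image Prod.fst with hS1
  have hS1ne : S1.Nonempty := hsupp.image _
  set m := S1.min' hS1ne with hm'
  set M := S1.max' hS1ne with hM'
  have hmem : ∀ i ∈ S1, ((i, 0) : ℤ × ℤ) ∈ τ.coeff.support := by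
    intro i hi
    obtain ⟨w, hw, hwi⟩ := Finset.mem_image.mp hi
    have h2 := hline w hw
    have : w = (i, 0) := Prod.ext hwi h2
    rwa [← this]
  have hmS : ((m, 0) : ℤ × ℤ) ∈ τ.coeff.support := hmem m (S1.min'_mem hS1ne)
  have hMS : ((M, 0) : ℤ × ℤ) ∈ τ.coeff.support := hmem M (S1.max'_mem hS1ne)
  have am : τ.coeff (m, 0) ≠ 0 := Finsupp.mem_support_iff.mp hmS
  have aM : τ.coeff (M, 0) ≠ 0 := Finsupp.mem_support_iff.mp hMS
  have hw1 : ∀ w ∈ τ.coeff.support, m ≤ w.1 ∧ w.1 ≤ M := fun w hw =>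
    ⟨S1.min'_le _ (Finset.mem_image_of_mem _ hw), S1.le_max' _ (Finset.mem_image_of_mem _ hw)⟩
  have hweq : ∀ w ∈ τ.coeff.support, w = (w.1, 0) := fun w hw => Prod.ext rfl (hline w hw)
  have hmM : m ≤ M := S1.min'_le _ (S1.max'_mem hS1ne)
  rcases eq_or_lt_of_le hmM with hmm | hmm
  · -- single column : c = 0
    have hczero : ∀ v, c v = 0 := by
      intro v
      have h0 := hann (v + (m, 0))
      rw [prodCoeff] at h0
      have hsub : τ.coeff.support = {((m, 0) : ℤ × ℤ)} := by
        apply Finset.eq_singleton_iff_unique_mem.mpr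
        refine ⟨hmS, fun w hw => ?_⟩
        have h1 := hw1 w hw
        rw [hweq w hw]
        have : w.1 = m := le_antisymm (hmm ▸ h1.2) h1.1
        rw [this]
      rw [hsub, Finset.sum_singleton, add_sub_cancel_right] at h0
      exact (mul_eq_zero.mp h0).resolve_left am
    exact ⟨1, one_ne_zero, fun u => by rw [hczero, hczero]⟩
  · -- genuine recurrence
    set d : ℕ := (M - m).toNat with hd'
    have hdZ : (d : ℤ) = M - m := Int.toNat_of_nonneg (by omega)
    have hd : 0 < d := by omega
    have hrec : ∀ x r : ℤ, ∑ w ∈ τ.coeff.support, τ.coeff w * c (x + (M - w.1), r) = 0 := by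
      intro x r
      have h0 := hann (x + M, r)
      rw [prodCoeff] at h0
      rw [← h0]
      apply Finset.sum_congr rfl
      intro w hw
      congr 1
      have h2 := hline w hw
      show c _ = c ((x + M, r) - w)
      congr 1
      apply Prod.ext
      · show x + (M - w.1) = x + M - w.1; ring
      · show r = r - w.2; rw [h2, sub_zero]
    have keyF : ∀ x r : ℤ, τ.coeff (m, 0) * c (x + (d : ℤ), r)
        = -∑ w ∈ τ.coeff.support.erase (m, 0), τ.coeff w * c (x + (M - w.1), r) := by
      intro x r
      have h := hrec x r
      rw [← Finset.add_sum_erase _ _ hmS] at h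
      have e : x + (M - ((m, 0) : ℤ × ℤ).1) = x + (d : ℤ) := by
        show x + (M - m) = _; rw [hdZ]
      rw [e] at h
      exact eq_neg_of_add_eq_zero_left h
    have keyB : ∀ x r : ℤ, τ.coeff (M, 0) * c (x, r)
        = -∑ w ∈ τ.coeff.support.erase (M, 0), τ.coeff w * c (x + (M - w.1), r) := by
      intro x r
      have h := hrec x r
      rw [← Finset.add_sum_erase _ _ hMS] at h
      have e : x + (M - ((M, 0) : ℤ × ℤ).1) = x := by
        show x + (M - M) = x; ring
      rw [e] at h
      exact eq_neg_of_add_eq_zero_left h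
    set W : ℤ → ℤ → (Fin d → ℂ) := fun r n k => c (n + (k : ℤ), r) with hW
    have Fwd : ∀ r a b : ℤ, W r a = W r b → c (a + (d : ℤ), r) = c (b + (d : ℤ), r) := by
      intro r a b hab
      apply mul_left_cancel₀ am
      rw [keyF a r, keyF b r]
      congr 1
      apply Finset.sum_congr rfl
      intro w hw
      obtain ⟨hwne, hwmem⟩ := Finset.mem_erase.mp hw
      have h1 := hw1 w hwmem
      have hne : w.1 ≠ m := fun h => hwne (by rw [hweq w hwmem, h])
      have hlt : m < w.1 := lt_of_le_of_ne h1.1 (Ne.symm hne)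
      have hkd : (M - w.1).toNat < d := by omega
      have hcf := congrFun hab ⟨(M - w.1).toNat, hkd⟩
      simp only [hW] at hcf
      rw [show a + (M - w.1) = a + (((M - w.1).toNat : ℕ) : ℤ) by omega,
          show b + (M - w.1) = b + (((M - w.1).toNat : ℕ) : ℤ) by omega, hcf]
    have Bwd : ∀ r a b : ℤ, W r a = W r b → c (a - 1, r) = c (b - 1, r) := by
      intro r a b hab
      apply mul_left_cancel₀ aM
      rw [keyB (a - 1) r, keyB (b - 1) r]
      congr 1
      apply Finset.sum_congr rfl
      intro w hw
      obtain ⟨hwne, hwmem⟩ := Finset.mem_erase.mp hw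
      have h1 := hw1 w hwmem
      have hne : w.1 ≠ M := fun h => hwne (by rw [hweq w hwmem, h])
      have hlt : w.1 < M := lt_of_le_of_ne h1.2 hne
      have hkd : (M - w.1 - 1).toNat < d := by omega
      have hcf := congrFun hab ⟨(M - w.1 - 1).toNat, hkd⟩
      simp only [hW] at hcf
      rw [show a - 1 + (M - w.1) = a + (((M - w.1 - 1).toNat : ℕ) : ℤ) by omega,
          show b - 1 + (M - w.1) = b + (((M - w.1 - 1).toNat : ℕ) : ℤ) by omega, hcf]
    have stepF : ∀ r a b : ℤ, W r a = W r b → W r (a + 1) = W r (b + 1) := by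
      intro r a b hab
      funext k
      rcases Nat.lt_or_ge ((k : ℕ) + 1) d with hk | hk
      · have hcf := congrFun hab ⟨(k : ℕ) + 1, hk⟩
        simp only [hW] at hcf ⊢
        rw [show a + 1 + ((k : ℕ) : ℤ) = a + ((((k : ℕ) + 1 : ℕ)) : ℤ) by push_cast; ring,
            show b + 1 + ((k : ℕ) : ℤ) = b + ((((k : ℕ) + 1 : ℕ)) : ℤ) by push_cast; ring, hcf]
      · have hkd : (k : ℕ) = d - 1 := by omega
        have hk2 : (k : ℕ) < d := k.isLt
        simp only [hW]
        rw [show a + 1 + ((k : ℕ) : ℤ) = a + (d : ℤ) by omega,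
            show b + 1 + ((k : ℕ) : ℤ) = b + (d : ℤ) by omega]
        exact Fwd r a b hab
    have stepB : ∀ r a b : ℤ, W r a = W r b → W r (a - 1) = W r (b - 1) := by
      intro r a b hab
      funext k
      rcases Nat.eq_zero_or_pos (k : ℕ) with hk | hk
      · simp only [hW]
        rw [show a - 1 + ((k : ℕ) : ℤ) = a - 1 by omega,
            show b - 1 + ((k : ℕ) : ℤ) = b - 1 by omega]
        exact Bwd r a b hab
      · have hkd : (k : ℕ) - 1 < d := by omega
        have hcf := congrFun hab ⟨(k : ℕ) - 1, hkd⟩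
        simp only [hW] at hcf ⊢
        rw [show a - 1 + ((k : ℕ) : ℤ) = a + ((((k : ℕ) - 1 : ℕ)) : ℤ) by omega,
            show b - 1 + ((k : ℕ) : ℤ) = b + ((((k : ℕ) - 1 : ℕ)) : ℤ) by omega, hcf]
    have prop : ∀ (r a b : ℤ), W r a = W r b → ∀ n : ℤ, W r (a + n) = W r (b + n) := by
      intro r a b hab n
      induction n using Int.induction_on with
      | zero => simpa using hab
      | succ n ih =>
        rw [show a + ((n : ℤ) + 1) = (a + n) + 1 by ring,
            show b + ((n : ℤ) + 1) = (b + n) + 1 by ring]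
        exact stepF _ _ _ ih
      | pred n ih =>
        rw [show a + (-(n : ℤ) - 1) = (a + -(n : ℤ)) - 1 by ring,
            show b + (-(n : ℤ) - 1) = (b + -(n : ℤ)) - 1 by ring]
        exact stepB _ _ _ ih
    set S : Finset ℂ := hfin.toFinset with hS
    set N : ℕ := S.card ^ d with hN
    have rowper : ∀ r : ℤ, ∃ p : ℤ, 0 < p ∧ p ≤ (N : ℤ) ∧ ∀ n, c (n - p, r) = c (n, r) := by
      intro r
      have hmaps : ∀ n ∈ Finset.range (N + 1),
          W r n ∈ Fintype.piFinset (fun _ : Fin d => S) := by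
        intro n _
        rw [Fintype.mem_piFinset]
        intro k
        rw [hS, Set.Finite.mem_toFinset]
        exact ⟨_, rfl⟩
      have hcard : (Fintype.piFinset (fun _ : Fin d => S)).card < (Finset.range (N + 1)).card := by
        rw [Finset.card_range, Fintype.card_piFinset]
        simp [hN]
      obtain ⟨i, hi, j, hj, hij, heq⟩ :=
        Finset.exists_ne_map_eq_of_card_lt_of_maps_to hcard hmaps
      have inner : ∀ i j : ℕ, i ∈ Finset.range (N + 1) → j ∈ Finset.range (N + 1) → i < j →
          W r i = W r j → ∃ p : ℤ, 0 < p ∧ p ≤ (N : ℤ) ∧ ∀ n, c (n - p, r) = c (n, r) := by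
        intro i j hi hj hlt heq
        rw [Finset.mem_range] at hi hj
        refine ⟨(j : ℤ) - i, by omega, by omega, ?_⟩
        intro n
        have h2 := prop r i j heq (n - j)
        rw [show (i : ℤ) + (n - j) = n - ((j : ℤ) - i) by ring,
            show (j : ℤ) + (n - j) = n by ring] at h2
        have h3 := congrFun h2 ⟨0, hd⟩
        simp only [hW] at h3
        rw [show n - ((j : ℤ) - i) + ((0 : ℕ) : ℤ) = n - ((j : ℤ) - i) by push_cast; ring,
            show n + ((0 : ℕ) : ℤ) = n by push_cast; ring] at h3
        exact h3
      rcases lt_or_gt_of_ne hij with h | h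
      · exact inner i j hi hj h heq
      · exact inner j i hj hi h heq.symm
    refine ⟨(N.factorial : ℤ), Int.natCast_ne_zero.mpr N.factorial_pos.ne', ?_⟩
    intro u
    obtain ⟨p, hp0, hpN, hper⟩ := rowper u.2
    have hdvd : p.toNat ∣ N.factorial := Nat.dvd_factorial (by omega) (by omega)
    obtain ⟨e, he⟩ := hdvd
    have iter : ∀ (t : ℕ) (n : ℤ), c (n - p * t, u.2) = c (n, u.2) := by
      intro t
      induction t with
      | zero => intro n; simp
      | succ t ih =>
        intro n
        rw [show n - p * ((t : ℕ) + 1 : ℕ) = (n - p) - p * t by push_cast; ring, ih, hper]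
    have hpe : p * (e : ℤ) = (N.factorial : ℤ) := by
      have h5 : ((p.toNat * e : ℕ) : ℤ) = (N.factorial : ℤ) := by rw [← he]
      push_cast at h5
      rw [← h5]
      have : ((p.toNat : ℤ)) = p := by omega
      rw [this]
    have hfinal := iter e u.1
    rw [hpe] at hfinal
    have e2 : u - ((N.factorial : ℤ), 0) = (u.1 - (N.factorial : ℤ), u.2) := by
      apply Prod.ext
      · rfl
      · show u.2 - 0 = u.2; ring
    rw [e2, hfinal, Prod.mk.eta]


noncomputable def X1 : L := AddMonoidAlgebra.single ((1, 0) : ℤ × ℤ) 1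
noncomputable def Y1 : L := AddMonoidAlgebra.single ((0, 1) : ℤ × ℤ) 1
noncomputable def φ0 : Polynomial ℂ →+* L := eval₂RingHom (algebraMap ℂ L) X1
noncomputable def ψ : RY →+* L := eval₂RingHom φ0 Y1

lemma psi_monomial (i j : ℕ) (a : ℂ) :
    ψ (monomial j (monomial i a)) = AddMonoidAlgebra.single ((i : ℤ), (j : ℤ)) a := by
  show eval₂ φ0 Y1 _ = _
  rw [eval₂_monomial]
  show φ0 (monomial i a) * Y1 ^ j = _
  show eval₂ (algebraMap ℂ L) X1 _ * _ = _
  rw [eval₂_monomial]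
  have h1 : algebraMap ℂ L a = AddMonoidAlgebra.single 0 a := rfl
  have h2 : X1 ^ i = AddMonoidAlgebra.single ((i : ℤ), 0) 1 := by
    rw [X1, AddMonoidAlgebra.single_pow, one_pow]
    congr 1
    simp
  have h3 : Y1 ^ j = AddMonoidAlgebra.single (0, (j : ℤ)) 1 := by
    rw [Y1, AddMonoidAlgebra.single_pow, one_pow]
    congr 1
    simp
  rw [h1, h2, h3, AddMonoidAlgebra.single_mul_single, AddMonoidAlgebra.single_mul_single]
  congr 1
  · simp
  · ring

lemma psi_eq_sum (P : RY) :
    ψ P = ∑ j ∈ P.support, ∑ i ∈ (P.coeff j).support,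
      AddMonoidAlgebra.single ((i : ℤ), (j : ℤ)) ((P.coeff j).coeff i) := by
  conv_lhs => rw [P.as_sum_support]
  rw [map_sum]
  apply Finset.sum_congr rfl
  intro j _
  conv_lhs => rw [(P.coeff j).as_sum_support]
  rw [map_sum (monomial j), map_sum]
  apply Finset.sum_congr rfl
  intro i _
  exact psi_monomial i j _

lemma psi_apply_nonneg (P : RY) (v : ℤ × ℤ) (h1 : 0 ≤ v.1) (h2 : 0 ≤ v.2) :
    (ψ P).coeff v = (P.coeff v.2.toNat).coeff v.1.toNat := by
  classical
  obtain ⟨i0, hi0⟩ : ∃ i0 : ℕ, v.1 = (i0 : ℤ) := ⟨v.1.toNat, (Int.toNat_of_nonneg h1).symm⟩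
  obtain ⟨j0, hj0⟩ : ∃ j0 : ℕ, v.2 = (j0 : ℤ) := ⟨v.2.toNat, (Int.toNat_of_nonneg h2).symm⟩
  have hv : v = ((i0 : ℤ), (j0 : ℤ)) := Prod.ext hi0 hj0
  have htn1 : v.1.toNat = i0 := by omega
  have htn2 : v.2.toNat = j0 := by omega
  rw [psi_eq_sum, htn1, htn2, hv]
  rw [AddMonoidAlgebra.coeff_sum, Finsupp.finset_sum_apply]
  have hterm : ∀ j : ℕ, (∑ i ∈ (P.coeff j).support,
      AddMonoidAlgebra.single ((i : ℤ), (j : ℤ)) ((P.coeff j).coeff i)).coeff ((i0 : ℤ), (j0 : ℤ))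
      = if j = j0 then (P.coeff j).coeff i0 else 0 := by
    intro j
    rw [AddMonoidAlgebra.coeff_sum, Finsupp.finset_sum_apply]
    simp only [AddMonoidAlgebra.coeff_single]
    by_cases hj : j = j0
    · subst hj
      rw [if_pos rfl]
      by_cases hi : i0 ∈ (P.coeff j).support
      · rw [Finset.sum_eq_single_of_mem i0 hi]
        · rw [Finsupp.single_apply, if_pos rfl]
        · intro i _ hne
          rw [Finsupp.single_apply, if_neg]
          simp only [Prod.mk.injEq]
          intro ⟨h, _⟩
          exact hne (by exact_mod_cast h)
      · rw [Polynomial.notMem_support_iff.mp hi, Finset.sum_eq_zero]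
        intro i hi2
        rw [Finsupp.single_apply, if_neg]
        simp only [Prod.mk.injEq]
        intro ⟨h, _⟩
        apply hi
        rw [show i0 = i by exact_mod_cast h.symm] at hi ⊢
        exact hi2
    · rw [if_neg hj, Finset.sum_eq_zero]
      intro i _
      rw [Finsupp.single_apply, if_neg]
      simp only [Prod.mk.injEq]
      intro ⟨_, h⟩
      exact hj (by exact_mod_cast h)
  rw [Finset.sum_congr rfl (fun j _ => hterm j)]
  by_cases hj0 : j0 ∈ P.support
  · rw [Finset.sum_ite_eq' P.support j0 (fun j => (P.coeff j).coeff i0), if_pos hj0]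
  · rw [Finset.sum_ite_eq' P.support j0 (fun j => (P.coeff j).coeff i0), if_neg hj0]
    have h9 : (P.coeff j0).coeff i0 = 0 := by
      rw [Polynomial.notMem_support_iff.mp hj0]; simp
    rw [h9]

lemma psi_apply_neg (P : RY) (v : ℤ × ℤ) (h : ¬(0 ≤ v.1 ∧ 0 ≤ v.2)) : (ψ P).coeff v = 0 := by
  rw [psi_eq_sum, AddMonoidAlgebra.coeff_sum, Finsupp.finset_sum_apply]
  apply Finset.sum_eq_zero
  intro j _
  rw [AddMonoidAlgebra.coeff_sum, Finsupp.finset_sum_apply]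
  apply Finset.sum_eq_zero
  intro i _
  rw [AddMonoidAlgebra.coeff_single, Finsupp.single_apply, if_neg]
  intro hv
  apply h
  rw [← hv]
  constructor <;> simp

lemma psi_injective : Function.Injective ψ := by
  intro P Q h
  ext j i
  have := congrArg (fun z : L => z.coeff ((i : ℤ), (j : ℤ))) h
  have hP := psi_apply_nonneg P ((i : ℤ), (j : ℤ)) (by simp) (by simp)
  have hQ := psi_apply_nonneg Q ((i : ℤ), (j : ℤ)) (by simp) (by simp)
  simp only [Int.toNat_natCast] at hP hQ
  rw [← hP, ← hQ]
  exact this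

lemma psi_C_X : ψ (C X) = X1 := by
  show eval₂ φ0 Y1 (C X) = X1
  rw [eval₂_C]
  show eval₂ (algebraMap ℂ L) X1 X = X1
  rw [eval₂_X]

lemma psi_X : ψ (X : RY) = Y1 := by
  show eval₂ φ0 Y1 X = Y1
  rw [eval₂_X]

lemma psi_C_C (b : ℂ) : ψ (C (C b)) = AddMonoidAlgebra.single 0 b := by
  have := psi_monomial 0 0 b
  simp only [monomial_zero_left, Nat.cast_zero] at this
  exact this

lemma isUnit_single (v : ℤ × ℤ) : IsUnit (AddMonoidAlgebra.single v (1 : ℂ) : L) := by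
  apply IsUnit.of_mul_eq_one (AddMonoidAlgebra.single (-v) 1)
  rw [AddMonoidAlgebra.single_mul_single, add_neg_cancel, mul_one]
  rfl

lemma single_one_mul_apply (v : ℤ × ℤ) (p : L) (u : ℤ × ℤ) :
    (AddMonoidAlgebra.single v (1 : ℂ) * p).coeff u = p.coeff (u - v) := by
  rw [AddMonoidAlgebra.coeff_single_mul_apply, one_mul, neg_add_eq_sub]

lemma reprL (p : L) (hp : p ≠ 0) :
    ∃ (v : ℤ × ℤ) (P : RY), P ≠ 0 ∧ ψ P = AddMonoidAlgebra.single v 1 * p ∧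
      ¬((X : RY) ∣ P) ∧ ¬((C X : RY) ∣ P) := by
  classical
  have hsupp : p.coeff.support.Nonempty := Finsupp.support_nonempty_iff.mpr (coeff_ne_zero hp)
  set a := (p.coeff.support.image Prod.fst).min' (hsupp.image _) with ha
  set b := (p.coeff.support.image Prod.snd).min' (hsupp.image _) with hb
  set v : ℤ × ℤ := (-a, -b) with hv
  set q : L := AddMonoidAlgebra.single v 1 * p with hqdef
  have hq : ∀ u, q.coeff u = p.coeff (u + (a, b)) := by
    intro u
    rw [hqdef, single_one_mul_apply]
    congr 1
    apply Prod.ext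
    · show u.1 - (-a) = u.1 + a; ring
    · show u.2 - (-b) = u.2 + b; ring
  have hbound : ∀ w ∈ p.coeff.support, a ≤ w.1 ∧ b ≤ w.2 := fun w hw =>
    ⟨Finset.min'_le _ _ (Finset.mem_image_of_mem _ hw),
     Finset.min'_le _ _ (Finset.mem_image_of_mem _ hw)⟩
  have hqsupp : ∀ u ∈ q.coeff.support, 0 ≤ u.1 ∧ 0 ≤ u.2 := by
    intro u hu
    have h1 : q.coeff u ≠ 0 := Finsupp.mem_support_iff.mp hu
    rw [hq] at h1
    have h2 : (u + (a, b)) ∈ p.coeff.support := Finsupp.mem_support_iff.mpr h1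
    have h3 := hbound _ h2
    constructor
    · have := h3.1; show (0:ℤ) ≤ u.1
      have : a ≤ u.1 + a := h3.1
      omega
    · have : b ≤ u.2 + b := h3.2
      omega
  set P : RY := ∑ u ∈ q.coeff.support, monomial u.2.toNat (monomial u.1.toNat (q.coeff u)) with hP
  have hpsiP : ψ P = q := by
    rw [hP, map_sum]
    have : ∀ u ∈ q.coeff.support,
        ψ (monomial u.2.toNat (monomial u.1.toNat (q.coeff u))) = AddMonoidAlgebra.single u (q.coeff u) := by
      intro u hu
      rw [psi_monomial]
      congr 1
      obtain ⟨h1, h2⟩ := hqsupp u hu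
      apply Prod.ext
      · show ((u.1.toNat : ℕ) : ℤ) = u.1; omega
      · show ((u.2.toNat : ℕ) : ℤ) = u.2; omega
    rw [Finset.sum_congr rfl this]
    exact q.sum_coeff_single
  have hqne : q ≠ 0 := by
    rw [hqdef]
    exact fun h => hp (((isUnit_single v).mul_right_eq_zero).mp h)
  have hPne : P ≠ 0 := by
    intro h
    apply hqne
    rw [← hpsiP, h, map_zero]
  refine ⟨v, P, hPne, by rw [hpsiP, hqdef], ?_, ?_⟩
  · -- ¬ X ∣ P  (X is the outer variable, mapped to Y1)
    rintro ⟨P', hP'⟩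
    obtain ⟨w, hw, hwb⟩ := Finset.mem_image.mp
      ((p.coeff.support.image Prod.snd).min'_mem (hsupp.image _))
    set u1 : ℤ × ℤ := w - (a, b) with hu1
    have hq1 : q.coeff u1 ≠ 0 := by
      rw [hq]
      have : u1 + (a, b) = w := by
        apply Prod.ext
        · show w.1 - a + a = w.1; ring
        · show w.2 - b + b = w.2; ring
      rw [this]
      exact Finsupp.mem_support_iff.mp hw
    have hu12 : u1.2 = 0 := by show w.2 - b = 0; rw [hwb]; ring
    apply hq1
    rw [← hpsiP, hP', map_mul, psi_X]
    rw [show (Y1 : L) = AddMonoidAlgebra.single ((0,1) : ℤ × ℤ) 1 from rfl,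
      single_one_mul_apply]
    apply psi_apply_neg
    intro ⟨_, h2⟩
    rw [show (u1 - ((0:ℤ),(1:ℤ))).2 = u1.2 - 1 from rfl, hu12] at h2
    omega
  · -- ¬ C X ∣ P  (inner variable, mapped to X1)
    rintro ⟨P', hP'⟩
    obtain ⟨w, hw, hwb⟩ := Finset.mem_image.mp
      ((p.coeff.support.image Prod.fst).min'_mem (hsupp.image _))
    set u1 : ℤ × ℤ := w - (a, b) with hu1
    have hq1 : q.coeff u1 ≠ 0 := by
      rw [hq]
      have : u1 + (a, b) = w := by
        apply Prod.ext
        · show w.1 - a + a = w.1; ring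
        · show w.2 - b + b = w.2; ring
      rw [this]
      exact Finsupp.mem_support_iff.mp hw
    have hu11 : u1.1 = 0 := by show w.1 - a = 0; rw [hwb]; ring
    apply hq1
    rw [← hpsiP, hP', map_mul, psi_C_X]
    rw [show (X1 : L) = AddMonoidAlgebra.single ((1,0) : ℤ × ℤ) 1 from rfl,
      single_one_mul_apply]
    apply psi_apply_neg
    intro ⟨h1, _⟩
    rw [show (u1 - ((1:ℤ),(0:ℤ))).1 = u1.1 - 1 from rfl, hu11] at h1
    omega

lemma small_support (h : RY) (hn : h ≠ 0) (hc : (ψ h).coeff.support.card ≤ 1) :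
    ∃ (i j : ℕ) (b : ℂ), b ≠ 0 ∧ h = C (C b) * (C X) ^ i * X ^ j := by
  have hne : ψ h ≠ 0 := fun hz => hn (psi_injective (by rw [hz, map_zero]))
  have hcard : (ψ h).coeff.support.card = 1 := by
    have : (ψ h).coeff.support.Nonempty := Finsupp.support_nonempty_iff.mpr (coeff_ne_zero hne)
    have := Finset.card_pos.mpr this
    omega
  obtain ⟨w, b', hb', hrep⟩ := Finsupp.card_support_eq_one'.mp hcard
  have hquad : 0 ≤ w.1 ∧ 0 ≤ w.2 := by
    by_contra hcon
    have := psi_apply_neg h w hcon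
    rw [hrep] at this
    rw [Finsupp.single_apply, if_pos rfl] at this
    exact hb' this
  have hrep' : ψ h = AddMonoidAlgebra.single w b' := AddMonoidAlgebra.ext hrep
  refine ⟨w.1.toNat, w.2.toNat, b', hb', ?_⟩
  apply psi_injective
  rw [hrep', map_mul, map_mul, psi_C_C, map_pow, map_pow, psi_C_X, psi_X]
  rw [show (X1 : L) = AddMonoidAlgebra.single ((1,0) : ℤ × ℤ) 1 from rfl,
    show (Y1 : L) = AddMonoidAlgebra.single ((0,1) : ℤ × ℤ) 1 from rfl,
    AddMonoidAlgebra.single_pow, AddMonoidAlgebra.single_pow,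
    AddMonoidAlgebra.single_mul_single, AddMonoidAlgebra.single_mul_single]
  rw [one_pow, one_pow, mul_one, mul_one]
  congr 1
  apply Prod.ext <;> simp <;> omega

lemma psi_C_line (r : Polynomial ℂ) : ∀ w ∈ (ψ (C r)).coeff.support, w.2 = 0 := by
  intro w hw
  have hval : (ψ (C r)).coeff w ≠ 0 := Finsupp.mem_support_iff.mp hw
  by_cases hquad : 0 ≤ w.1 ∧ 0 ≤ w.2
  · have := psi_apply_nonneg (C r) w hquad.1 hquad.2
    rw [this] at hval
    have : (C r : RY).coeff w.2.toNat ≠ 0 := fun hz => hval (by rw [hz]; simp)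
    rw [coeff_C] at this
    by_cases h0 : w.2.toNat = 0
    · omega
    · rw [if_neg h0] at this; exact absurd rfl this
  · exact absurd (psi_apply_neg (C r) w hquad) hval

lemma exists_line (f g : L) (hf : f ≠ 0) (hg : g ≠ 0)
    (hcop : ∀ p : L, p ∣ f → p ∣ g → p.coeff.support.card ≤ 1) :
    ∃ (ρ A B : L), ρ ≠ 0 ∧ (∀ w ∈ ρ.coeff.support, w.2 = 0) ∧ ρ = A * f + B * g := by
  classical
  set R := Polynomial ℂ
  set K := RatFunc ℂ
  obtain ⟨vf, F, hFne, hFeq, hFX, hFCX⟩ := reprL f hf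
  obtain ⟨vg, G, hGne, hGeq, hGX, hGCX⟩ := reprL g hg
  have hψFf : ψ F ∣ f := by
    refine ⟨AddMonoidAlgebra.single (-vf) 1, ?_⟩
    rw [hFeq, mul_comm, ← mul_assoc, AddMonoidAlgebra.single_mul_single, neg_add_cancel,
      mul_one]
    rw [show (AddMonoidAlgebra.single (0 : ℤ × ℤ) (1:ℂ) : L) = 1 from rfl, one_mul]
  have hψGg : ψ G ∣ g := by
    refine ⟨AddMonoidAlgebra.single (-vg) 1, ?_⟩
    rw [hGeq, mul_comm, ← mul_assoc, AddMonoidAlgebra.single_mul_single, neg_add_cancel,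
      mul_one]
    rw [show (AddMonoidAlgebra.single (0 : ℤ × ℤ) (1:ℂ) : L) = 1 from rfl, one_mul]
  -- no nonunit common divisor of F and G
  have nocommon : ∀ h : RY, h ∣ F → h ∣ G → IsUnit h := by
    intro h hhF hhG
    by_contra hnu
    have hhne : h ≠ 0 := by
      rintro rfl
      exact hFne (zero_dvd_iff.mp hhF)
    have hcard := hcop (ψ h) (dvd_trans (map_dvd ψ hhF) hψFf) (dvd_trans (map_dvd ψ hhG) hψGg)
    obtain ⟨i, j, b, hb, hhrep⟩ := small_support h hhne hcard
    rcases Nat.eq_zero_or_pos j with hj | hj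
    · rcases Nat.eq_zero_or_pos i with hi | hi
      · apply hnu
        rw [hhrep, hi, hj, pow_zero, pow_zero, mul_one, mul_one]
        exact (Polynomial.isUnit_C.mpr (Polynomial.isUnit_C.mpr hb.isUnit))
      · apply hFCX
        refine dvd_trans ?_ hhF
        rw [hhrep]
        exact dvd_mul_of_dvd_left (Dvd.dvd.mul_left (dvd_pow_self _ (by omega)) _) _
    · apply hFX
      refine dvd_trans ?_ hhF
      rw [hhrep]
      exact Dvd.dvd.mul_left (dvd_pow_self _ (by omega)) _
  set α := algebraMap R K with hα
  have hinj : Function.Injective α := IsFractionRing.injective R K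
  have hmapinj : Function.Injective (Polynomial.map α) := Polynomial.map_injective α hinj
  set F' := F.map α with hF'
  set G' := G.map α with hG'
  have hF'ne : F' ≠ 0 := fun h => hFne (hmapinj (by rw [Polynomial.map_zero]; exact h))
  have smul_eq : ∀ (b : R) (p : Polynomial K), b • p = Polynomial.C (α b) * p := by
    intro b p
    rw [Algebra.smul_def, Polynomial.algebraMap_apply]
  have hbez := EuclideanDomain.gcd_eq_gcd_ab F' G'
  set d := EuclideanDomain.gcd F' G' with hd
  by_cases hu : IsUnit d
  · -- coprime case: Bezout identity, clear denominators
    obtain ⟨w, hw⟩ := hu.exists_left_inv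
    set u := w * EuclideanDomain.gcdA F' G' with hu'
    set v := w * EuclideanDomain.gcdB F' G' with hv'
    have hBez : u * F' + v * G' = 1 := by
      calc u * F' + v * G'
          = w * (F' * EuclideanDomain.gcdA F' G' + G' * EuclideanDomain.gcdB F' G') := by ring
        _ = w * d := by rw [← hbez]
        _ = 1 := hw
    obtain ⟨bu, hbu⟩ := IsLocalization.integerNormalization_map_to_map (nonZeroDivisors R) u
    obtain ⟨bv, hbv⟩ := IsLocalization.integerNormalization_map_to_map (nonZeroDivisors R) v
    set U := IsLocalization.integerNormalization (nonZeroDivisors R) u with hU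
    set V := IsLocalization.integerNormalization (nonZeroDivisors R) v with hV
    have hbune : (bu : R) ≠ 0 := nonZeroDivisors.ne_zero bu.2
    have hbvne : (bv : R) ≠ 0 := nonZeroDivisors.ne_zero bv.2
    have key : (Polynomial.C (bv : R) * U) * F + (Polynomial.C (bu : R) * V) * G
        = Polynomial.C ((bu : R) * (bv : R)) := by
      apply hmapinj
      rw [Polynomial.map_add, Polynomial.map_mul, Polynomial.map_mul, Polynomial.map_mul,
        Polynomial.map_mul, Polynomial.map_C, Polynomial.map_C, Polynomial.map_C, hbu, hbv,
        smul_eq, smul_eq, map_mul, Polynomial.C_mul]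
      linear_combination (Polynomial.C (α (bu:R)) * Polynomial.C (α (bv:R))) * hBez
    refine ⟨ψ (Polynomial.C ((bu : R) * (bv : R))),
      ψ (Polynomial.C (bv : R) * U) * AddMonoidAlgebra.single vf 1,
      ψ (Polynomial.C (bu : R) * V) * AddMonoidAlgebra.single vg 1, ?_, psi_C_line _, ?_⟩
    · intro h
      have := psi_injective (by rw [h, map_zero] : ψ _ = ψ 0)
      rw [Polynomial.C_eq_zero] at this
      exact mul_ne_zero hbune hbvne this
    · rw [← key, map_add, map_mul ψ _ F, map_mul ψ _ G, hFeq, hGeq]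
      ring
  · -- common factor case: contradiction
    exfalso
    have hdne : d ≠ 0 := fun h => hF'ne ((EuclideanDomain.gcd_eq_zero_iff.mp h).1)
    obtain ⟨bd, hbd⟩ := IsLocalization.integerNormalization_map_to_map (nonZeroDivisors R) d
    set d0 := IsLocalization.integerNormalization (nonZeroDivisors R) d with hd0
    have hbdne : (bd : R) ≠ 0 := nonZeroDivisors.ne_zero bd.2
    have hαbdne : α (bd : R) ≠ 0 := fun h => hbdne (hinj (by rw [h, map_zero]))
    have hCbd : IsUnit (Polynomial.C (α (bd : R))) :=
      Polynomial.isUnit_C.mpr (isUnit_iff_ne_zero.mpr hαbdne)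
    have hmapd0 : d0.map α = Polynomial.C (α (bd : R)) * d := by rw [hbd, smul_eq]
    have hd0ne : d0 ≠ 0 := by
      intro h
      rw [h, Polynomial.map_zero] at hmapd0
      rcases mul_eq_zero.mp hmapd0.symm with h1 | h1
      · exact hαbdne (Polynomial.C_eq_zero.mp h1)
      · exact hdne h1
    set h0 := d0.primPart with hh0
    have hprim : h0.IsPrimitive := d0.isPrimitive_primPart
    have hcont_ne : α d0.content ≠ 0 := fun h =>
      hd0ne (Polynomial.content_eq_zero_iff.mp (hinj (by rw [h, map_zero])))
    have hCcont : IsUnit (Polynomial.C (α d0.content)) :=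
      Polynomial.isUnit_C.mpr (isUnit_iff_ne_zero.mpr hcont_ne)
    have heq1 : Polynomial.C (α d0.content) * h0.map α = Polynomial.C (α (bd : R)) * d := by
      rw [← hmapd0, ← Polynomial.map_C, ← Polynomial.map_mul, ← Polynomial.eq_C_content_mul_primPart]
    obtain ⟨wd, hwd⟩ := hCbd.exists_left_inv
    have hdvd_d : h0.map α ∣ d := by
      refine ⟨wd * Polynomial.C (α d0.content), ?_⟩
      linear_combination d * hwd.symm - wd * heq1
    have hd_dvd : d ∣ h0.map α := by
      obtain ⟨wc, hwc⟩ := hCcont.exists_left_inv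
      refine ⟨wc * Polynomial.C (α (bd : R)), ?_⟩
      linear_combination (h0.map α) * hwc.symm + wc * heq1
    -- transfer divisibility to F and G via Gauss's lemma
    have main : ∀ E : RY, E ≠ 0 → (d ∣ E.map α) → h0 ∣ E := by
      intro E hEne hdE
      have h1 : h0.map α ∣ E.map α := hdvd_d.trans hdE
      have hcontE : α E.content ≠ 0 := fun h =>
        hEne (Polynomial.content_eq_zero_iff.mp (hinj (by rw [h, map_zero])))
      have hCcontE : IsUnit (Polynomial.C (α E.content)) :=
        Polynomial.isUnit_C.mpr (isUnit_iff_ne_zero.mpr hcontE)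
      have h2 : E.map α = Polynomial.C (α E.content) * E.primPart.map α := by
        rw [← Polynomial.map_C, ← Polynomial.map_mul, ← Polynomial.eq_C_content_mul_primPart]
      have h3 : h0.map α ∣ E.primPart.map α := by
        rw [h2] at h1
        obtain ⟨wc, hwc⟩ := hCcontE.exists_left_inv
        obtain ⟨t, ht⟩ := h1
        refine ⟨wc * t, ?_⟩
        linear_combination (E.primPart.map α) * hwc.symm + wc * ht
      have h4 : h0 ∣ E.primPart :=
        Polynomial.IsPrimitive.dvd_of_fraction_map_dvd_fraction_map hprim
          h3
      exact h4.trans E.primPart_dvd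
    have hh0F : h0 ∣ F := main F hFne (EuclideanDomain.gcd_dvd_left F' G')
    have hh0G : h0 ∣ G := by
      apply main G ?_ (EuclideanDomain.gcd_dvd_right F' G')
      intro h
      rw [h] at hGeq
      rw [map_zero] at hGeq
      exact hg (((isUnit_single vg).mul_right_eq_zero).mp hGeq.symm)
    have hunit := nocommon h0 hh0F hh0G
    apply hu
    obtain ⟨t, ht⟩ := hd_dvd
    exact isUnit_of_dvd_unit ⟨t, ht⟩ (hunit.map (Polynomial.mapRingHom α))

-- appended to full.lean inside namespace PC (before end PC)
lemma prodCoeff_sub_left (f g : L) (c u) :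
    prodCoeff (f - g) c u = prodCoeff f c u - prodCoeff g c u := by
  have h := prodCoeff_add_left (f - g) g c u
  rw [sub_add_cancel] at h
  rw [h]; ring

lemma prodCoeff_one (c : ℤ × ℤ → ℂ) (u : ℤ × ℤ) : prodCoeff (1 : L) c u = c u := by
  rw [show (1 : L) = AddMonoidAlgebra.single 0 1 from rfl, prodCoeff_single, one_mul, sub_zero]

lemma horizMaster (c : ℤ × ℤ → ℂ) (hfin : (Set.range c).Finite)
    (f g : L)
    (hcop : ∀ p : L, p ∣ f → p ∣ g → p.coeff.support.card ≤ 1)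
    (hfc : TwoPeriodic (prodCoeff f c)) (hgc : TwoPeriodic (prodCoeff g c)) :
    ∃ P : ℤ, P ≠ 0 ∧ ∀ u, c (u - (P, 0)) = c u := by
  classical
  -- helper for the degenerate monomial case
  have mono_case : ∀ h : L, h ≠ 0 → h.coeff.support.card ≤ 1 → TwoPeriodic (prodCoeff h c) →
      ∃ P : ℤ, P ≠ 0 ∧ ∀ u, c (u - (P, 0)) = c u := by
    intro h hne hcard hper
    have hcard1 : h.coeff.support.card = 1 := by
      have : h.coeff.support.Nonempty := Finsupp.support_nonempty_iff.mpr (coeff_ne_zero hne)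
      have := Finset.card_pos.mpr this
      omega
    obtain ⟨w, b, hb, hrep⟩ := Finsupp.card_support_eq_one'.mp hcard1
    obtain ⟨K, hK, hKper⟩ := exists_horiz hper
    refine ⟨K, hK, ?_⟩
    intro u
    have h1 := hKper (u + w)
    have hrep' : h = AddMonoidAlgebra.single w b := AddMonoidAlgebra.ext hrep
    rw [hrep'] at h1
    rw [prodCoeff_single, prodCoeff_single] at h1
    rw [show u + w - (K, 0) - w = u - (K, 0) by ring, add_sub_cancel_right] at h1
    exact mul_left_cancel₀ hb h1
  by_cases hf : f = 0
  · by_cases hg : g = 0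
    · exfalso
      have hdvd : ∀ p : L, p ∣ f ∧ p ∣ g := fun p => by
        rw [hf, hg]; exact ⟨dvd_zero p, dvd_zero p⟩
      set p : L := AddMonoidAlgebra.single ((0, 0) : ℤ × ℤ) 1
        + AddMonoidAlgebra.single ((1, 0) : ℤ × ℤ) 1 with hp
      have hcard := hcop p (hdvd p).1 (hdvd p).2
      have : p.coeff.support = {((0, 0) : ℤ × ℤ), ((1, 0) : ℤ × ℤ)} := by
        rw [hp, AddMonoidAlgebra.coeff_add, AddMonoidAlgebra.coeff_single,
          AddMonoidAlgebra.coeff_single, Finsupp.support_add_eq, Finsupp.support_single_ne_zero _ one_ne_zero,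
          Finsupp.support_single_ne_zero _ one_ne_zero]
        · rfl
        · rw [Finsupp.support_single_ne_zero _ one_ne_zero,
            Finsupp.support_single_ne_zero _ one_ne_zero]
          simp
      rw [this, Finset.card_insert_of_notMem (by decide), Finset.card_singleton] at hcard
      omega
    · exact mono_case g hg (hcop g (hf ▸ dvd_zero g) dvd_rfl) hgc
  · by_cases hg : g = 0
    · exact mono_case f hf (hcop f dvd_rfl (hg ▸ dvd_zero f)) hfc
    · -- main case
      obtain ⟨K1, hK1, hper1⟩ := exists_horiz hfc
      obtain ⟨K2, hK2, hper2⟩ := exists_horiz hgc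
      set K : ℤ := K1 * K2 with hKdef
      have hK : K ≠ 0 := mul_ne_zero hK1 hK2
      have hperf : ((K, 0) : ℤ × ℤ) ∈ periods (prodCoeff f c) := by
        rw [hKdef, mul_comm]; exact mul_period hper1 K2
      have hperg : ((K, 0) : ℤ × ℤ) ∈ periods (prodCoeff g c) := mul_period hper2 K1
      obtain ⟨ρ, A, B, hρne, hρline, hρeq⟩ := exists_line f g hf hg hcop
      set Aop : L := AddMonoidAlgebra.single ((K, 0) : ℤ × ℤ) 1 - 1 with hAop
      have hAopne : Aop ≠ 0 := by
        intro h
        have h2 : Aop.coeff ((K, 0) : ℤ × ℤ) = 0 := by rw [h]; rfl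
        rw [hAop, AddMonoidAlgebra.coeff_sub, Finsupp.sub_apply] at h2
        have e1 : (AddMonoidAlgebra.single ((K, 0) : ℤ × ℤ) (1 : ℂ)).coeff ((K, 0) : ℤ × ℤ) = 1 :=
          Finsupp.single_eq_same
        have e2 : (1 : L).coeff ((K, 0) : ℤ × ℤ) = 0 := by
          show (AddMonoidAlgebra.single (0 : ℤ × ℤ) (1 : ℂ)).coeff ((K, 0) : ℤ × ℤ) = 0
          rw [AddMonoidAlgebra.coeff_single, Finsupp.single_apply, if_neg]
          intro hcon
          apply hK
          have := congrArg Prod.fst hcon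
          simpa using this.symm
        rw [e1, e2] at h2
        simp at h2
      have hAopline : ∀ w ∈ Aop.coeff.support, w.2 = 0 := by
        intro w hw
        by_contra hw2
        have hval : Aop.coeff w ≠ 0 := Finsupp.mem_support_iff.mp hw
        apply hval
        rw [hAop, AddMonoidAlgebra.coeff_sub, Finsupp.sub_apply]
        have e1 : (AddMonoidAlgebra.single ((K, 0) : ℤ × ℤ) (1 : ℂ)).coeff w = 0 := by
          rw [AddMonoidAlgebra.coeff_single, Finsupp.single_apply, if_neg]
          intro hcon; exact hw2 (by rw [← hcon])
        have e2 : (1 : L).coeff w = 0 := by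
          show (AddMonoidAlgebra.single (0 : ℤ × ℤ) (1 : ℂ)).coeff w = 0
          rw [AddMonoidAlgebra.coeff_single, Finsupp.single_apply, if_neg]
          intro hcon; apply hw2; rw [← hcon]; rfl
        rw [e1, e2, sub_zero]
      set τ : L := Aop * ρ with hτdef
      have hτne : τ ≠ 0 := mul_ne_zero hAopne hρne
      have hτline : ∀ w ∈ τ.coeff.support, w.2 = 0 := by
        intro w hw
        have := AddMonoidAlgebra.support_coeff_mul_subset Aop ρ hw
        rw [Finset.mem_add] at this
        obtain ⟨a, ha, b, hb, hab⟩ := this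
        have := hAopline a ha
        have := hρline b hb
        rw [← hab]
        show a.2 + b.2 = 0
        omega
      -- annihilation of c by Aop * f and Aop * g
      have hannf : ∀ u, prodCoeff (Aop * f) c u = 0 := by
        intro u
        rw [prodCoeff_mul]
        rw [hAop, prodCoeff_sub_left, prodCoeff_single, one_mul, prodCoeff_one]
        rw [sub_eq_zero]
        exact hperf u
      have hanng : ∀ u, prodCoeff (Aop * g) c u = 0 := by
        intro u
        rw [prodCoeff_mul]
        rw [hAop, prodCoeff_sub_left, prodCoeff_single, one_mul, prodCoeff_one]
        rw [sub_eq_zero]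
        exact hperg u
      have hann : ∀ u, prodCoeff τ c u = 0 := by
        intro u
        have e : τ = A * (Aop * f) + B * (Aop * g) := by rw [hτdef, hρeq]; ring
        rw [e, prodCoeff_add_left, prodCoeff_mul, prodCoeff_mul,
          prodCoeff_zero_right A _ _ (fun x => by
            rw [prodCoeff_congr (Aop * f) x (fun y => rfl)]; exact hannf x),
          prodCoeff_zero_right B _ _ (fun x => hanng x), add_zero]
      exact oneD c hfin τ hτne hτline hann

noncomputable def Dc : L ≃ₐ[ℂ] L :=
  AddMonoidAlgebra.domCongr ℂ ℂ (AddEquiv.prodComm : (ℤ × ℤ) ≃+ (ℤ × ℤ))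

lemma swap_prodCoeff (f : L) (c : ℤ × ℤ → ℂ) (u : ℤ × ℤ) :
    prodCoeff (Dc f) (fun x => c x.swap) u = prodCoeff f c u.swap := by
  rw [prodCoeff, prodCoeff]
  rw [show (Dc f).coeff.support = f.coeff.support.map (AddEquiv.prodComm : (ℤ × ℤ) ≃+ (ℤ × ℤ))
    from AddMonoidAlgebra.domCongr_support _ f]
  rw [Finset.sum_map]
  apply Finset.sum_congr rfl
  intro w hw
  have e0 : ((AddEquiv.prodComm : (ℤ × ℤ) ≃+ (ℤ × ℤ)) : (ℤ × ℤ) ≃ (ℤ × ℤ)).toEmbedding w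
      = w.swap := rfl
  rw [e0]
  have e1 : (Dc f).coeff w.swap = f.coeff w := by
    rw [Dc, AddMonoidAlgebra.coeff_domCongr]
    congr 1
  have e2 : (u - w.swap).swap = u.swap - w := Prod.ext rfl rfl
  rw [e1, e2]

lemma TwoPeriodic_swap {h : ℤ × ℤ → ℂ} (H : TwoPeriodic h) :
    TwoPeriodic (fun u => h u.swap) := by
  obtain ⟨t₁, t₂, hd, p1, p2⟩ := H
  refine ⟨t₁.swap, t₂.swap, ?_, ?_, ?_⟩
  · show t₁.2 * t₂.1 - t₁.1 * t₂.2 ≠ 0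
    intro h0
    apply hd
    linarith
  · intro u
    show h ((u - t₁.swap).swap) = h u.swap
    rw [show (u - t₁.swap).swap = u.swap - t₁ from Prod.ext rfl rfl]
    exact p1 u.swap
  · intro u
    show h ((u - t₂.swap).swap) = h u.swap
    rw [show (u - t₂.swap).swap = u.swap - t₂ from Prod.ext rfl rfl]
    exact p2 u.swap

end PC

theorem two_periodic_of_coprime_periodizers
    (c : ℤ × ℤ → ℂ) (hfin : (Set.range c).Finite)
    (f g : AddMonoidAlgebra ℂ (ℤ × ℤ))
    (hcoprime : ∀ p : AddMonoidAlgebra ℂ (ℤ × ℤ), p ∣ f → p ∣ g → p.coeff.support.card ≤ 1)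
    (hfc : TwoPeriodic (prodCoeff f c)) (hgc : TwoPeriodic (prodCoeff g c)) :
    TwoPeriodic c := by
  classical
  obtain ⟨P, hP, hPper⟩ := PC.horizMaster c hfin f g hcoprime hfc hgc
  set c' : ℤ × ℤ → ℂ := fun x => c x.swap with hc'
  have hfin' : (Set.range c').Finite :=
    hfin.subset (by rintro _ ⟨x, rfl⟩; exact ⟨x.swap, rfl⟩)
  have hsymm_dvd : ∀ p q : PC.L, p ∣ PC.Dc q → PC.Dc.symm p ∣ q := by
    intro p q h1
    obtain ⟨t, ht⟩ := h1
    refine ⟨PC.Dc.symm t, ?_⟩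
    have := congrArg PC.Dc.symm ht
    rwa [AlgEquiv.symm_apply_apply, map_mul] at this
  have hcop' : ∀ p : PC.L, p ∣ PC.Dc f → p ∣ PC.Dc g → p.coeff.support.card ≤ 1 := by
    intro p h1 h2
    have h3 := hcoprime _ (hsymm_dvd p f h1) (hsymm_dvd p g h2)
    rwa [show PC.Dc.symm p = AddMonoidAlgebra.domCongr ℂ ℂ
        (AddEquiv.prodComm : (ℤ × ℤ) ≃+ (ℤ × ℤ)).symm p from rfl,
      AddMonoidAlgebra.domCongr_support, Finset.card_map] at h3
  have hfc' : TwoPeriodic (prodCoeff (PC.Dc f) c') := by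
    rw [show prodCoeff (PC.Dc f) c' = fun u => prodCoeff f c u.swap
      from funext (PC.swap_prodCoeff f c)]
    exact PC.TwoPeriodic_swap hfc
  have hgc' : TwoPeriodic (prodCoeff (PC.Dc g) c') := by
    rw [show prodCoeff (PC.Dc g) c' = fun u => prodCoeff g c u.swap
      from funext (PC.swap_prodCoeff g c)]
    exact PC.TwoPeriodic_swap hgc
  obtain ⟨Q, hQ, hQper⟩ := PC.horizMaster c' hfin' (PC.Dc f) (PC.Dc g) hcop' hfc' hgc'
  refine ⟨(P, 0), (0, Q), ?_, hPper, ?_⟩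
  · show P * Q - 0 * 0 ≠ 0
    simpa using mul_ne_zero hP hQ
  · intro u
    have h5 := hQper u.swap
    show c (u - ((0 : ℤ), Q)) = c u
    have e1 : u - ((0 : ℤ), Q) = (u.swap - ((Q : ℤ), (0 : ℤ))).swap := Prod.ext rfl rfl
    have e2 : c' (u.swap - ((Q : ℤ), (0 : ℤ))) = c ((u.swap - ((Q : ℤ), (0 : ℤ))).swap) := rfl
    have e3 : c' u.swap = c u := by rw [hc']; simp
    rw [e1, ← e2, h5, e3]
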